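/- arXiv:1507.01017 — 5 statements merged into one kernel-verified Lean document; each statement's English description precedes it below -/
import Mathlib

section
/- For t > 0, the sum Σ_{n=0}^∞ ∫_{−t}^{t} [ (t+y)^n (t−y)^n / (n!)^2 + 2t (t+y)^n (t−y)^n / ((n+1)! n!) ] · 2^{1−2n} dy equals 10 e^t + 6 e^{−t} − 16. -/
/-!
Each integrand is a constant multiple of `(t + y)ⁿ (t - y)ⁿ`, whose integral over `[-t, t]` is
the Beta integral `(2t)^(2n+1) B(n+1, n+1) = (2t)^(2n+1) (n!)² / (2n+1)!`. The `n`-th term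
therefore collapses to `4 t^(2n+1)/(2n+1)! + 16 t^(2n+2)/(2n+2)!`, and the series is
`4 sinh t + 16 (cosh t - 1) = 10 eᵗ + 6 e⁻ᵗ - 16`.
-/

open Nat

theorem integral_pow_mul_one_sub_pow (m n : ℕ) :
    ∫ x in (0 : ℝ)..1, x ^ m * (1 - x) ^ n = (m ! * n ! / (m + n + 1)! : ℝ) := by
  have h := Complex.betaIntegral_eq_Gamma_mul_div (m + 1) (n + 1)
    (by norm_cast; omega) (by norm_cast; omega)
  simp only [Complex.betaIntegral, add_sub_cancel_right, Complex.cpow_natCast,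
    show (m + 1 + (n + 1) : ℂ) = ((m + n + 1 : ℕ) : ℂ) + 1 by push_cast; ring,
    Complex.Gamma_nat_eq_factorial] at h
  rw [← Complex.ofReal_inj, ← intervalIntegral.integral_ofReal]
  push_cast
  exact h

theorem integral_sub_pow_mul_sub_pow (a b : ℝ) (m n : ℕ) :
    ∫ y in a..b, (y - a) ^ m * (b - y) ^ n
      = (b - a) ^ (m + n + 1) * (m ! * n ! / (m + n + 1)!) := by
  have h := intervalIntegral.smul_integral_comp_mul_add
    (fun y => (y - a) ^ m * (b - y) ^ n) (a := 0) (b := 1) (b - a) a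
  have hscale (x : ℝ) : ((b - a) * x + a - a) ^ m * (b - ((b - a) * x + a)) ^ n
      = (b - a) ^ (m + n) * (x ^ m * (1 - x) ^ n) := by
    rw [add_sub_cancel_right, show b - ((b - a) * x + a) = (b - a) * (1 - x) by ring,
      mul_pow, mul_pow]
    ring
  simp only [mul_zero, zero_add, mul_one, sub_add_cancel, smul_eq_mul, hscale,
    intervalIntegral.integral_const_mul, integral_pow_mul_one_sub_pow] at h
  rw [← h]
  ring

theorem integral_wave_term (t : ℝ) (n : ℕ) :
    (∫ y in (-t)..t,
        ((t + y) ^ n * (t - y) ^ n / ((n.factorial : ℝ)) ^ 2 +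
          2 * t * ((t + y) ^ n * (t - y) ^ n) /
            (((n + 1).factorial : ℝ) * (n.factorial : ℝ))) *
          (2 : ℝ) ^ (1 - 2 * (n : ℤ)))
      = 4 * (t ^ (2 * n + 1) / (2 * n + 1)!) + 16 * (t ^ (2 * n + 2) / (2 * n + 2)!) := by
  have hbeta := integral_sub_pow_mul_sub_pow (-t) t n n
  simp only [sub_neg_eq_add, add_comm _ t, ← two_mul, mul_pow] at hbeta
  have hzpow : (2 : ℝ) ^ (1 - 2 * (n : ℤ)) = 2 / 2 ^ (2 * n) := by
    rw [zpow_sub₀ two_ne_zero, zpow_one]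
    exact_mod_cast rfl
  have hfactor (y : ℝ) : ((t + y) ^ n * (t - y) ^ n / ((n.factorial : ℝ)) ^ 2 +
          2 * t * ((t + y) ^ n * (t - y) ^ n) /
            (((n + 1).factorial : ℝ) * (n.factorial : ℝ))) *
          (2 : ℝ) ^ (1 - 2 * (n : ℤ)) = (t + y) ^ n * (t - y) ^ n *
        ((1 / (n ! : ℝ) ^ 2 + 2 * t / ((n + 1)! * n !)) * (2 / 2 ^ (2 * n))) := by
    rw [hzpow]; ring
  have hfact_succ (k : ℕ) : ((k + 1)! : ℝ) = (k + 1) * k ! := by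
    push_cast [Nat.factorial_succ]; ring
  simp_rw [hfactor]
  rw [intervalIntegral.integral_mul_const, hbeta, hfact_succ n,
    show 2 * n + 2 = 2 * n + 1 + 1 by ring, hfact_succ (2 * n + 1)]
  push_cast
  field_simp
  ring

theorem Real.hasSum_cosh_sub_one (r : ℝ) :
    HasSum (fun n => r ^ (2 * n + 2) / (2 * n + 2)!) (Real.cosh r - 1) := by
  simpa [mul_add] using (hasSum_nat_add_iff' 1).mpr (Real.hasSum_cosh r)

theorem stmt5_general (t : ℝ) :
    ∑' n : ℕ,
      (∫ y in (-t)..t,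
        ((t + y) ^ n * (t - y) ^ n / ((n.factorial : ℝ)) ^ 2 +
          2 * t * ((t + y) ^ n * (t - y) ^ n) /
            (((n + 1).factorial : ℝ) * (n.factorial : ℝ))) *
          (2 : ℝ) ^ (1 - 2 * (n : ℤ)))
      = 10 * Real.exp t + 6 * Real.exp (-t) - 16 := by
  have hsum := ((Real.hasSum_sinh t).mul_left 4).add ((Real.hasSum_cosh_sub_one t).mul_left 16)
  rw [tsum_congr (integral_wave_term t), hsum.tsum_eq, Real.sinh_eq, Real.cosh_eq]
  ring

/-- The total wave of influences for `(ℝ, d/dx, -d/dx)`: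
`Σₙ ∫_{-t}^{t} [ (t+y)ⁿ(t-y)ⁿ/(n!)² + 2t(t+y)ⁿ(t-y)ⁿ/((n+1)!n!) ]·2^{1-2n} dy
  = 10eᵗ + 6e⁻ᵗ - 16`. -/
theorem stmt5 (t : ℝ) (ht : 0 < t) :
    ∑' n : ℕ,
      (∫ y in (-t)..t,
        ((t + y) ^ n * (t - y) ^ n / ((n.factorial : ℝ)) ^ 2 +
          2 * t * ((t + y) ^ n * (t - y) ^ n) /
            (((n + 1).factorial : ℝ) * (n.factorial : ℝ))) *
          (2 : ℝ) ^ (1 - 2 * (n : ℤ)))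
      = 10 * Real.exp t + 6 * Real.exp (-t) - 16 :=
  stmt5_general t
end

section
/- For t > 0, ∫_0^t Σ_{n=0}^∞ ( 2 s^n (t−s)^n / (n!)² + s^{n+1}(t−s)^n / ((n+1)! n!) + s^n (t−s)^{n+1} / (n! (n+1)!) ) ds = 2(e^t − 1). -/
/-!
By the beta integral `∫₀ᵗ sᵃ (t - s)ᵇ ds = a! b! tᵃ⁺ᵇ⁺¹ / (a + b + 1)!`, the `n`-th summand
integrates to `2 (t²ⁿ⁺¹/(2n+1)! + t²ⁿ⁺²/(2n+2)!)`: twice the `n`-th consecutive pair of terms of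
the series `eᵗ - 1 = ∑ tᵏ⁺¹/(k+1)!`. Summation and integration may be interchanged because
every summand is nonnegative on `[0, t]`, so the integrals of their norms are these same
summable values.
-/

open intervalIntegral MeasureTheory Set Nat

theorem integral_pow_mul_sub_pow (a b : ℕ) (t : ℝ) :
    ∫ s in (0:ℝ)..t, s ^ a * (t - s) ^ b = a ! * b ! * t ^ (a + b + 1) / (a + b + 1)! := by
  induction b generalizing a with
  | zero =>
    simp only [pow_zero, mul_one, add_zero, integral_pow, factorial_succ, factorial_zero]
    push_cast
    field_simp
    simp
  | succ b ih =>
    have hsplit (s : ℝ) : s ^ a * (t - s) ^ (b + 1)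
        = t * (s ^ a * (t - s) ^ b) - s ^ (a + 1) * (t - s) ^ b := by ring
    have hint (c : ℕ) : IntervalIntegrable (fun s : ℝ => s ^ c * (t - s) ^ b) volume 0 t :=
      (by fun_prop : Continuous _).intervalIntegrable _ _
    simp_rw [hsplit]
    rw [integral_sub ((hint a).const_mul t) (hint (a + 1)), intervalIntegral.integral_const_mul,
      ih, ih, show a + 1 + b + 1 = a + b + 1 + 1 by ring,
      show a + (b + 1) + 1 = a + b + 1 + 1 by ring,
      factorial_succ (a + b + 1), factorial_succ a, factorial_succ b]
    push_cast
    field_simp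
    ring

theorem HasSum.add_even_odd_pairs {G : Type*} [AddCommGroup G] [UniformSpace G]
    [IsUniformAddGroup G] [CompleteSpace G] [T2Space G] {f : ℕ → G} {a : G} (hf : HasSum f a) :
    HasSum (fun n => f (2 * n) + f (2 * n + 1)) a := by
  have he := hf.summable.comp_injective (i := (2 * ·)) fun m n h => by simp_all
  have ho := hf.summable.comp_injective (i := (2 * · + 1)) fun m n h => by simp_all
  rw [hf.unique (he.hasSum.even_add_odd ho.hasSum)]
  exact he.hasSum.add ho.hasSum

theorem Real.hasSum_pow_succ_div_factorial (t : ℝ) :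
    HasSum (fun k : ℕ => t ^ (k + 1) / (k + 1)!) (Real.exp t - 1) := by
  have h := NormedSpace.expSeries_div_hasSum_exp t
  rw [← Real.exp_eq_exp_ℝ] at h
  simpa using (hasSum_nat_add_iff' 1).2 h

/-- The `n`-th summand of `vol(Γ(s, t - s))`. -/
noncomputable def pathVolumeTerm (t s : ℝ) (n : ℕ) : ℝ :=
  2 * s ^ n * (t - s) ^ n / ((n ! : ℝ)) ^ 2 +
    s ^ (n + 1) * (t - s) ^ n / (((n + 1)! : ℝ) * (n ! : ℝ)) +
    s ^ n * (t - s) ^ (n + 1) / ((n ! : ℝ) * ((n + 1)! : ℝ))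

theorem continuous_pathVolumeTerm (t : ℝ) (n : ℕ) : Continuous (pathVolumeTerm t · n) := by
  unfold pathVolumeTerm; fun_prop

theorem pathVolumeTerm_nonneg {t s : ℝ} (hs : 0 ≤ s) (hst : s ≤ t) (n : ℕ) :
    0 ≤ pathVolumeTerm t s n := by
  have : 0 ≤ t - s := sub_nonneg.2 hst
  unfold pathVolumeTerm; positivity

theorem integral_pathVolumeTerm (t : ℝ) (n : ℕ) :
    ∫ s in (0:ℝ)..t, pathVolumeTerm t s n
      = 2 * (t ^ (2 * n + 1) / (2 * n + 1)! + t ^ (2 * n + 2) / (2 * n + 2)!) := by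
  have hint (a b : ℕ) : IntervalIntegrable (fun s : ℝ => s ^ a * (t - s) ^ b) volume 0 t :=
    (by fun_prop : Continuous _).intervalIntegrable _ _
  have hterm (s : ℝ) : pathVolumeTerm t s n
      = 2 / (n ! : ℝ) ^ 2 * (s ^ n * (t - s) ^ n)
        + 1 / ((n + 1)! * n !) * (s ^ (n + 1) * (t - s) ^ n)
        + 1 / (n ! * (n + 1)!) * (s ^ n * (t - s) ^ (n + 1)) := by
    unfold pathVolumeTerm; ring
  simp_rw [hterm]
  rw [integral_add (((hint n n).const_mul _).add ((hint (n + 1) n).const_mul _))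
      ((hint n (n + 1)).const_mul _),
    integral_add ((hint n n).const_mul _) ((hint (n + 1) n).const_mul _),
    intervalIntegral.integral_const_mul, intervalIntegral.integral_const_mul,
    intervalIntegral.integral_const_mul, integral_pow_mul_sub_pow, integral_pow_mul_sub_pow,
    integral_pow_mul_sub_pow, show n + n + 1 = 2 * n + 1 by ring,
    show n + 1 + n + 1 = 2 * n + 2 by ring, show n + (n + 1) + 1 = 2 * n + 2 by ring]
  field_simp
  ring

/-- The wave of influences for `(ℝ², ∂/∂x, ∂/∂y)`:
`∫₀ᵗ vol(Γ(s,t-s)) ds = 2(eᵗ - 1)`. -/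
theorem stmt10 (t : ℝ) (ht : 0 < t) :
    (∫ s in (0:ℝ)..t, ∑' n : ℕ,
      (2 * s ^ n * (t - s) ^ n / ((n.factorial : ℝ)) ^ 2 +
        s ^ (n + 1) * (t - s) ^ n / (((n + 1).factorial : ℝ) * (n.factorial : ℝ)) +
        s ^ n * (t - s) ^ (n + 1) / ((n.factorial : ℝ) * ((n + 1).factorial : ℝ))))
      = 2 * (Real.exp t - 1) := by
  change ∫ s in (0:ℝ)..t, ∑' n, pathVolumeTerm t s n = _
  have hvalues :
      HasSum (fun n => ∫ s in (0:ℝ)..t, pathVolumeTerm t s n) (2 * (Real.exp t - 1)) := by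
    simp_rw [integral_pathVolumeTerm]
    exact ((Real.hasSum_pow_succ_div_factorial t).add_even_odd_pairs).mul_left 2
  have hnorm (n : ℕ) :
      ∫ s in Ioc 0 t, ‖pathVolumeTerm t s n‖ = ∫ s in (0:ℝ)..t, pathVolumeTerm t s n := by
    rw [integral_of_le ht.le]
    exact setIntegral_congr_fun measurableSet_Ioc fun s hs =>
      Real.norm_of_nonneg (pathVolumeTerm_nonneg hs.1.le hs.2 n)
  rw [integral_of_le ht.le, ← integral_tsum_of_summable_integral_norm
    (fun n => ((continuous_pathVolumeTerm t n).intervalIntegrable 0 t).1)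
    (by simpa only [hnorm] using hvalues.summable)]
  simpa only [integral_of_le ht.le] using hvalues.tsum_eq
end

section
/- For 1 ≤ k < m, the number of sparse subsets of {1,...,m} of cardinality k equals p(m−k, k−1) + 2·p(m−k, k) + p(m−k, k+1), where p(a,b) denotes the number of compositions (ordered partitions) of a into exactly b positive parts. -/
/-!
Both sides equal `(m - k + 1).choose k`. Splitting the sparse subsets of `{1, ..., m + 2}` according
to whether they contain `m + 2` gives Pascal's rule for their number. Subtracting `1` from every
part turns a composition of `a + 1` into `b + 1` positive parts into a weak composition of `a - b`
into `b + 1` parts, so stars and bars gives `p(a + 1, b + 1) = a.choose b`, and the right-hand side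
collapses by applying Pascal's rule twice.
-/

/-- `pComp a b` is the number of compositions (ordered partitions) of `a` into exactly
`b` positive parts. -/
noncomputable def pComp (a b : ℕ) : ℕ :=
  Nat.card {l : List ℕ // l.sum = a ∧ l.length = b ∧ ∀ x ∈ l, 0 < x}

open Finset

theorem Nat.card_fin_tuples_sum_eq (b n : ℕ) :
    Nat.card {f : Fin b → ℕ // ∑ i, f i = n} = (b + n - 1).choose n := by
  rw [← Nat.card_congr (Sym.equivNatSumOfFintype (Fin b) n), Nat.card_eq_fintype_card,
    Sym.card_sym_eq_choose, Fintype.card_fin]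

theorem Nat.choose_add_two_add_two (n k : ℕ) :
    (n + 2).choose (k + 2) = n.choose k + 2 * n.choose (k + 1) + n.choose (k + 2) := by
  simp only [Nat.choose_succ_succ]
  ring

theorem pComp_eq_card_tuples (a b : ℕ) :
    pComp a b = Nat.card {f : Fin b → ℕ // ∑ i, f i + b = a} := by
  let succParts (f : {f : Fin b → ℕ // ∑ i, f i + b = a}) :
      {l : List ℕ // l.sum = a ∧ l.length = b ∧ ∀ x ∈ l, 0 < x} :=
    ⟨List.ofFn (fun i => f.1 i + 1), by simp [List.sum_ofFn, sum_add_distrib, f.2]⟩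
  refine (Nat.card_eq_of_bijective succParts ⟨fun f g h => ?_, ?_⟩).symm
  · ext i
    simpa using congrFun (List.ofFn_injective (congrArg Subtype.val h)) i
  · rintro ⟨l, rfl, rfl, hpos⟩
    have hsucc : ∀ (i : ℕ) (hi : i < l.length), l[i] - 1 + 1 = l[i] := fun i hi =>
      Nat.sub_add_cancel (hpos _ (List.getElem_mem hi))
    refine ⟨⟨fun i => l[i] - 1, ?_⟩, by simp [succParts, hsucc]⟩
    calc ∑ i : Fin l.length, (l[i] - 1) + l.length
        = ∑ i : Fin l.length, (l[i] - 1 + 1) := by simp [sum_add_distrib]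
      _ = l.sum := by simp [hsucc, ← List.sum_ofFn]

theorem pComp_add_self (n b : ℕ) : pComp (n + b) b = (n + b - 1).choose n := by
  simp only [pComp_eq_card_tuples, add_left_inj, Nat.card_fin_tuples_sum_eq, add_comm b]

theorem pComp_eq_zero_of_lt {a b : ℕ} (h : a < b) : pComp a b = 0 := by
  rw [pComp_eq_card_tuples, Nat.card_eq_zero]
  exact Or.inl ⟨fun f => by omega⟩

theorem pComp_succ_zero (a : ℕ) : pComp (a + 1) 0 = 0 := by
  simp [pComp_eq_card_tuples]

theorem pComp_succ_succ (a b : ℕ) : pComp (a + 1) (b + 1) = a.choose b := by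
  rcases le_or_gt b a with h | h
  · obtain ⟨n, rfl⟩ := Nat.exists_eq_add_of_le' h
    rw [add_assoc, pComp_add_self, ← add_assoc, Nat.add_sub_cancel, Nat.choose_symm_add]
  · rw [pComp_eq_zero_of_lt (by omega), Nat.choose_eq_zero_of_lt h]

theorem pComp_pred_add_two_mul_pComp_add_pComp_succ {a : ℕ} (ha : 0 < a) (k : ℕ) :
    pComp a (k - 1) + 2 * pComp a k + pComp a (k + 1) = (a + 1).choose k := by
  obtain ⟨c, rfl⟩ := Nat.exists_eq_add_one_of_ne_zero ha.ne'
  match k with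
  | 0 => simp [pComp_succ_zero, pComp_succ_succ]
  | 1 => simp [pComp_succ_zero, pComp_succ_succ]; ring
  | k + 2 => simp [pComp_succ_succ, Nat.choose_add_two_add_two]

def sparseSets (m k : ℕ) : Finset (Finset ℕ) :=
  {A ∈ (Icc 1 m).powersetCard k | ∀ i ∈ A, i + 1 ∉ A}

theorem mem_sparseSets {m k : ℕ} {A : Finset ℕ} :
    A ∈ sparseSets m k ↔ A ⊆ Icc 1 m ∧ #A = k ∧ ∀ i ∈ A, i + 1 ∉ A := by
  simp [sparseSets, mem_powersetCard, and_assoc]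

theorem notMem_of_mem_sparseSets {m k x : ℕ} {A : Finset ℕ} (hA : A ∈ sparseSets m k)
    (hx : m < x) : x ∉ A := fun h => by
  have := mem_Icc.1 ((mem_sparseSets.1 hA).1 h)
  omega

theorem sparseSets_zero (m : ℕ) : sparseSets m 0 = {∅} := by
  ext A
  simp only [mem_sparseSets, card_eq_zero, mem_singleton]
  grind

theorem sparseSets_eq_empty_of_lt {m k : ℕ} (h : m < k) : sparseSets m k = ∅ :=
  eq_empty_of_forall_notMem fun A hA => by
    obtain ⟨hsub, rfl, -⟩ := mem_sparseSets.1 hA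
    have := card_le_card hsub
    simp only [Nat.card_Icc] at this
    omega

theorem filter_notMem_sparseSets (m k : ℕ) :
    {A ∈ sparseSets (m + 1) k | m + 1 ∉ A} = sparseSets m k := by
  ext A
  simp only [mem_filter, mem_sparseSets, subset_iff, mem_Icc]
  grind

theorem filter_mem_sparseSets (m k : ℕ) :
    {A ∈ sparseSets (m + 2) (k + 1) | m + 2 ∈ A} = (sparseSets m k).image (insert (m + 2)) := by
  ext A
  constructor
  · simp only [mem_filter, mem_sparseSets, subset_iff, mem_Icc]
    rintro ⟨⟨hA, hcard, hsparse⟩, hm⟩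
    -- `m + 1 ∉ A` because `m + 2 ∈ A`, so erasing `m + 2` lands in `{1, ..., m}`
    exact mem_image.2 ⟨A.erase (m + 2), mem_sparseSets.2 (by grind), insert_erase hm⟩
  · simp only [mem_image]
    rintro ⟨B, hB, rfl⟩
    have hnot : m + 2 ∉ B := notMem_of_mem_sparseSets hB (by omega)
    simp only [mem_sparseSets, subset_iff, mem_Icc, mem_filter] at hB ⊢
    grind [card_insert_of_notMem]

theorem card_sparseSets_add_two (m k : ℕ) :
    #(sparseSets (m + 2) (k + 1)) = #(sparseSets m k) + #(sparseSets (m + 1) (k + 1)) := by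
  have hinj : Set.InjOn (insert (m + 2)) (sparseSets m k : Set (Finset ℕ)) :=
    fun B hB C hC h => by
      have hB' : m + 2 ∉ B := notMem_of_mem_sparseSets hB (by omega)
      have hC' : m + 2 ∉ C := notMem_of_mem_sparseSets hC (by omega)
      rw [← erase_insert hB', ← erase_insert hC', h]
  rw [← card_filter_add_card_filter_not (m + 2 ∈ ·), filter_mem_sparseSets,
    card_image_of_injOn hinj, filter_notMem_sparseSets]

theorem card_sparseSets : ∀ m k : ℕ, #(sparseSets m k) = (m + 1 - k).choose k
  | m, 0 => by simp [sparseSets_zero]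
  | 0, k + 1 => by simp [sparseSets_eq_empty_of_lt]
  | 1, 1 => by decide
  | 1, k + 2 => by simp [sparseSets_eq_empty_of_lt]
  | m + 2, k + 1 => by
    rw [card_sparseSets_add_two, card_sparseSets m k, card_sparseSets (m + 1) (k + 1)]
    rcases le_or_gt k (m + 1) with h | h
    · rw [show m + 2 + 1 - (k + 1) = m + 1 - k + 1 by omega, Nat.choose_succ_succ,
        show m + 1 + 1 - (k + 1) = m + 1 - k by omega]
    · simp [Nat.choose_eq_zero_of_lt (by omega : 0 < k), show m + 1 - k = 0 by omega,
        show m + 2 + 1 - (k + 1) = 0 by omega]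

theorem stmt12_general (m k : ℕ) (h2 : k < m) :
    Nat.card {A : Finset ℕ //
        A ⊆ Finset.Icc 1 m ∧ A.card = k ∧ ∀ i ∈ A, i + 1 ∉ A} =
      pComp (m - k) (k - 1) + 2 * pComp (m - k) k + pComp (m - k) (k + 1) := by
  have hcard : Nat.card {A : Finset ℕ // A ⊆ Icc 1 m ∧ #A = k ∧ ∀ i ∈ A, i + 1 ∉ A} =
      #(sparseSets m k) := by
    rw [← Nat.card_eq_finsetCard]
    exact Nat.card_congr (Equiv.subtypeEquivRight fun A => mem_sparseSets.symm)
  rw [hcard, card_sparseSets, show m + 1 - k = m - k + 1 by omega,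
    pComp_pred_add_two_mul_pComp_add_pComp_succ (by omega)]

/-- For `1 ≤ k < m`, the number of sparse subsets of `{1,...,m}` of cardinality `k`
(no two consecutive elements) equals `p(m-k,k-1) + 2p(m-k,k) + p(m-k,k+1)`. -/
theorem stmt12 (m k : ℕ) (h1 : 1 ≤ k) (h2 : k < m) :
    Nat.card {A : Finset ℕ //
        A ⊆ Finset.Icc 1 m ∧ A.card = k ∧ ∀ i ∈ A, i + 1 ∉ A} =
      pComp (m - k) (k - 1) + 2 * pComp (m - k) k + pComp (m - k) (k + 1) :=
  stmt12_general m k h2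
end

section
/- Fix k ≥ 1, n ≥ 0, and a vector (n₁,...,n_k) of positive integers with n₁+...+n_k = n+1. The number of patterns c ∈ D(n,k) (tuples c : {0,...,n} → [k] with c(i) ≠ c(i+1)) whose content satisfies |c⁻¹(j)| = n_j for each j ∈ [k] equals the number of perfect shuffles |PSh_k(n₁,...,n_k)|. -/
/-!
A map `c` with content `m` is the same thing as a shuffle of blocks of sizes `m j`: the `j`-th
block is sent, in increasing order, onto the fibre `c⁻¹(j)`, and conversely `c` records the block
of each position. Under this correspondence two consecutive positions carry the same colour
exactly when some block has two consecutive elements at consecutive positions, so patterns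
correspond to perfect shuffles.
-/

open Finset

section Shuffle

variable {ι X : Type*} [DecidableEq ι] [Fintype X] [LinearOrder X] {m : ι → ℕ}

noncomputable def enumFibers (c : X → ι) (hc : ∀ j, #{x | c x = j} = m j) :
    (Σ j, Fin (m j)) → X :=
  fun p => orderEmbOfFin {x | c x = p.1} (hc p.1) p.2

theorem apply_enumFibers (c : X → ι) (hc : ∀ j, #{x | c x = j} = m j) (p : Σ j, Fin (m j)) :
    c (enumFibers c hc p) = p.1 :=
  (mem_filter.1 (orderEmbOfFin_mem {x | c x = p.1} (hc p.1) p.2)).2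

theorem enumFibers_bijective (c : X → ι) (hc : ∀ j, #{x | c x = j} = m j) :
    Function.Bijective (enumFibers c hc) := by
  constructor
  · rintro ⟨j, a⟩ ⟨j', b⟩ hab
    obtain rfl : j = j' := by
      simpa only [apply_enumFibers] using congrArg c hab
    obtain rfl : a = b := (orderEmbOfFin {x | c x = j} (hc j)).injective hab
    rfl
  · intro x
    obtain ⟨i, hi⟩ : x ∈ Set.range (orderEmbOfFin {y | c y = c x} (hc (c x))) := by
      simp [range_orderEmbOfFin]
    exact ⟨⟨c x, i⟩, hi⟩

theorem card_filter_symm_fst_eq (α : (Σ j, Fin (m j)) ≃ X) (j : ι) :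
    #{x | (α.symm x).1 = j} = m j := by
  rw [← card_fin (m j), ← card_image_of_injective _ (α.injective.comp sigma_mk_injective)]
  congr 1
  ext x
  simp only [mem_filter, mem_univ, true_and, mem_image, Function.comp_apply]
  constructor
  · rintro rfl
    exact ⟨(α.symm x).2, by simp⟩
  · rintro ⟨i, rfl⟩
    simp

noncomputable def contentEquivShuffle :
    {c : X → ι // ∀ j, #{x | c x = j} = m j} ≃
      {α : (Σ j, Fin (m j)) ≃ X // ∀ j, StrictMono fun i : Fin (m j) => α ⟨j, i⟩} where
  toFun c := ⟨.ofBijective _ (enumFibers_bijective c.1 c.2),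
    fun j => (orderEmbOfFin {x | c.1 x = j} (c.2 j)).strictMono⟩
  invFun α := ⟨fun x => (α.1.symm x).1, card_filter_symm_fst_eq α.1⟩
  left_inv c := by
    ext x
    obtain ⟨p, rfl⟩ := (enumFibers_bijective c.1 c.2).2 x
    simp [apply_enumFibers]
  right_inv α := by
    ext1
    ext ⟨j, i⟩ : 1
    have hmem (i : Fin (m j)) : α.1 ⟨j, i⟩ ∈ ({x | (α.1.symm x).1 = j} : Finset X) := by simp
    exact (congrFun (orderEmbOfFin_unique (card_filter_symm_fst_eq α.1 j) hmem (α.2 j)) i).symm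

end Shuffle

theorem shuffle_adjacent_ne_iff {ι : Type*} {n : ℕ} {m : ι → ℕ}
    (α : (Σ j, Fin (m j)) ≃ Fin (n + 1)) (hα : ∀ j, StrictMono fun i : Fin (m j) => α ⟨j, i⟩) :
    (∀ (j : ι) (i : ℕ) (h : i + 1 < m j),
        ((α ⟨j, ⟨i, Nat.lt_of_succ_lt h⟩⟩ : Fin (n + 1)) : ℕ) + 1 <
          ((α ⟨j, ⟨i + 1, h⟩⟩ : Fin (n + 1)) : ℕ)) ↔
      ∀ i : Fin n, (α.symm i.castSucc).1 ≠ (α.symm i.succ).1 := by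
  constructor
  · intro hgap i heq
    obtain ⟨⟨j, a⟩, ha⟩ := α.surjective i.castSucc
    obtain ⟨⟨j', b⟩, hb⟩ := α.surjective i.succ
    rw [← ha, ← hb, α.symm_apply_apply, α.symm_apply_apply] at heq
    subst heq
    have hab : a < b := (hα j).lt_iff_lt.1 (by simp [ha, hb, Fin.lt_def])
    have hsucc : (a : ℕ) + 1 < m j := by omega
    -- the successor of `a` in its block would lie strictly between positions `i` and `i + 1`
    have hle : α ⟨j, ⟨a + 1, hsucc⟩⟩ ≤ α ⟨j, b⟩ := (hα j).le_iff_le.2 (Fin.le_def.2 hab)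
    have hgt := hgap j a hsucc
    rw [Fin.eta, ha] at hgt
    rw [hb, Fin.le_def] at hle
    simp only [Fin.val_castSucc, Fin.val_succ] at hgt hle
    omega
  · intro hne j i h
    have hlt : (α ⟨j, ⟨i, by omega⟩⟩ : ℕ) < α ⟨j, ⟨i + 1, h⟩⟩ :=
      hα j (show (⟨i, by omega⟩ : Fin (m j)) < ⟨i + 1, h⟩ by simp)
    by_contra hcon
    let p : Fin n := ⟨α ⟨j, ⟨i, by omega⟩⟩, by omega⟩
    have hp : p.castSucc = α ⟨j, ⟨i, by omega⟩⟩ := rfl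
    have hp' : p.succ = α ⟨j, ⟨i + 1, h⟩⟩ := Fin.ext (by simp [p]; omega)
    exact hne p (by rw [hp, hp', α.symm_apply_apply, α.symm_apply_apply])

/-- The number of patterns `c : {0,...,n} → [k]` (no two consecutive values equal) with
content `|c⁻¹(j)| = m j` equals the number of perfect shuffles of blocks of sizes
`m 1, ..., m k`. -/
theorem stmt15 (k n : ℕ) (m : Fin k → ℕ) :
    Nat.card {c : Fin (n + 1) → Fin k //
        (∀ i : Fin n, c i.castSucc ≠ c i.succ) ∧
        ∀ j, (Finset.univ.filter fun i => c i = j).card = m j} =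
    Nat.card {α : (Σ j : Fin k, Fin (m j)) ≃ Fin (n + 1) //
        (∀ j, StrictMono fun i : Fin (m j) => α ⟨j, i⟩) ∧
        (∀ (j : Fin k) (i : ℕ) (h : i + 1 < m j),
          ((α ⟨j, ⟨i, by omega⟩⟩ : Fin (n + 1)) : ℕ) + 1 <
            ((α ⟨j, ⟨i + 1, h⟩⟩ : Fin (n + 1)) : ℕ))} := by
  refine Nat.card_congr <| (Equiv.subtypeEquivRight fun _ => and_comm).trans <|
    (Equiv.subtypeSubtypeEquivSubtypeInter _ _).symm.trans <|
    Equiv.trans ?_ (Equiv.subtypeSubtypeEquivSubtypeInter _ _)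
  exact (contentEquivShuffle.symm.subtypeEquiv fun α => shuffle_adjacent_ne_iff α.1 α.2).symm
end

section
/- For the directed manifold (ℝ^k, ∂/∂x₁,...,∂/∂x_k) and a pattern c ∈ D(n,k), the moduli space of directed paths from 0 to (x₁,...,x_k) ∈ ℝ_{>0}^k with pattern c is nonempty only if the total time is t = x₁+...+x_k, and when nonempty it is a product over j in the support of c of simplices, with volume ∏_{j ∈ s(c)} x_j^{|c|_j − 1} / (|c|_j − 1)!, where |c|_j = |c⁻¹(j)| and s(c) = { j : |c|_j > 0 }. -/
/-!
Grouping the time coordinates by the direction `c m` they move in identifies the moduli space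
with the product over directions `j` of the sets `{u ≥ 0, Σ u = x j}`; adding up these
constraints forces `t = Σ x j`. The volume of `{w ≥ 0, Σ w ≤ a} ⊆ ℝ^d` is found by induction on
`d`, slicing along the first coordinate: the slice at height `y` is the same set of size `a - y`
in dimension `d - 1`, and `∫₀^a (a - y)^d / d! dy = a^(d+1) / (d+1)!`.
-/

open MeasureTheory Set

/-- The paper's simplex `Δ_d(a) ⊆ ℝ^(d+1)`, projected away from its last coordinate. -/
def cornerSimplex (d : ℕ) (a : ℝ) : Set (Fin d → ℝ) :=
  {w | (∀ i, 0 ≤ w i) ∧ ∑ i, w i ≤ a}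

theorem measurableSet_cornerSimplex (d : ℕ) (a : ℝ) : MeasurableSet (cornerSimplex d a) := by
  unfold cornerSimplex
  measurability

theorem cornerSimplex_eq_empty {d : ℕ} {a : ℝ} (ha : a < 0) : cornerSimplex d a = ∅ :=
  eq_empty_of_forall_notMem fun _ ⟨hw, hsum⟩ =>
    (hsum.trans_lt ha).not_ge (Finset.sum_nonneg fun i _ => hw i)

theorem cons_mem_cornerSimplex_succ {d : ℕ} {a y : ℝ} {w : Fin d → ℝ} :
    Fin.cons y w ∈ cornerSimplex (d + 1) a ↔ 0 ≤ y ∧ w ∈ cornerSimplex d (a - y) := by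
  simp only [cornerSimplex, mem_ofPred_eq, Fin.forall_fin_succ, Fin.sum_univ_succ, Fin.cons_zero,
    Fin.cons_succ, le_sub_iff_add_le', and_assoc]

theorem integral_sub_pow_div_factorial (d : ℕ) (a : ℝ) :
    ∫ y in (0 : ℝ)..a, (a - y) ^ d / d.factorial = a ^ (d + 1) / (d + 1).factorial := by
  rw [intervalIntegral.integral_div, intervalIntegral.integral_comp_sub_left (fun y => y ^ d),
    sub_self, sub_zero, integral_pow, Nat.factorial_succ]
  push_cast
  field_simp
  ring

theorem lintegral_Icc_sub_pow_div_factorial (d : ℕ) {a : ℝ} (ha : 0 ≤ a) :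
    ∫⁻ y in Icc 0 a, ENNReal.ofReal ((a - y) ^ d / d.factorial)
      = ENNReal.ofReal (a ^ (d + 1) / (d + 1).factorial) := by
  rw [← integral_sub_pow_div_factorial, intervalIntegral.integral_of_le ha,
    ← integral_Icc_eq_integral_Ioc, ofReal_integral_eq_lintegral_ofReal]
  · exact Continuous.integrableOn_Icc (by fun_prop)
  · filter_upwards [ae_restrict_mem measurableSet_Icc] with y hy
    have : 0 ≤ a - y := sub_nonneg.2 hy.2
    positivity

theorem volume_cornerSimplex (d : ℕ) {a : ℝ} (ha : 0 ≤ a) :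
    volume (cornerSimplex d a) = ENNReal.ofReal (a ^ d / d.factorial) := by
  induction d generalizing a with
  | zero => simp [cornerSimplex, ha, volume_pi]
  | succ d ih =>
    let e := MeasurableEquiv.piFinSuccAbove (fun _ : Fin (d + 1) => ℝ) 0
    have he : ∀ y w, e.symm (y, w) = Fin.cons y w := by
      simp [e, MeasurableEquiv.piFinSuccAbove_symm_apply, Fin.insertNthEquiv, Fin.insertNth_zero']
    have hsection : ∀ y, volume (Prod.mk y ⁻¹' (e.symm ⁻¹' cornerSimplex (d + 1) a))
        = (Icc 0 a).indicator (fun y => ENNReal.ofReal ((a - y) ^ d / d.factorial)) y := by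
      intro y
      have hpre : Prod.mk y ⁻¹' (e.symm ⁻¹' cornerSimplex (d + 1) a)
          = {_w | 0 ≤ y} ∩ cornerSimplex d (a - y) := by
        ext w; simp only [mem_preimage, he, cons_mem_cornerSimplex_succ]; rfl
      by_cases hy : y ∈ Icc 0 a
      · simp [hpre, hy.1, ih (sub_nonneg.2 hy.2), indicator_of_mem hy]
      · rw [indicator_of_notMem hy]
        rcases not_and_or.1 hy with hy | hy
        · simp [hpre, hy]
        · simp [hpre, cornerSimplex_eq_empty (sub_neg.2 (not_le.1 hy))]
    calc volume (cornerSimplex (d + 1) a) = volume (e.symm ⁻¹' cornerSimplex (d + 1) a) :=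
          ((volume_preserving_piFinSuccAbove _ 0).symm.measure_preimage
            (measurableSet_cornerSimplex _ _).nullMeasurableSet).symm
      _ = ∫⁻ y, volume (Prod.mk y ⁻¹' (e.symm ⁻¹' cornerSimplex (d + 1) a)) :=
          Measure.prod_apply (e.symm.measurable (measurableSet_cornerSimplex _ _))
      _ = ∫⁻ y in Icc 0 a, ENNReal.ofReal ((a - y) ^ d / d.factorial) := by
          simp_rw [hsection, lintegral_indicator measurableSet_Icc]
      _ = _ := lintegral_Icc_sub_pow_div_factorial d ha

section Fibers

variable {α β : Type*}

@[simps]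
def Equiv.piFibers (c : α → β) (R : Type*) : (α → R) ≃ ∀ j, {m // c m = j} → R where
  toFun s _ m := s m
  invFun u m := u (c m) ⟨m, rfl⟩
  left_inv _ := rfl
  right_inv _ := by ext _ ⟨_, rfl⟩; rfl

variable [Fintype α] [Fintype β] [DecidableEq β]

theorem sum_eq_sum_of_sum_fiber_eq {c : α → β} {s : α → ℝ} {x : β → ℝ}
    (h : ∀ j, ∑ m ∈ Finset.univ.filter (fun m => c m = j), s m = x j) :
    ∑ m, s m = ∑ j, x j :=
  (Finset.sum_fiberwise _ c s).symm.trans (Finset.sum_congr rfl fun j _ => h j)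

theorem bijOn_piFibers (c : α → β) (x : β → ℝ) :
    BijOn (Equiv.piFibers c ℝ)
      {s | (∀ m, 0 ≤ s m) ∧ (∑ m, s m = ∑ j, x j) ∧
        ∀ j, ∑ m ∈ Finset.univ.filter (fun m => c m = j), s m = x j}
      {u | ∀ j, (∀ m, 0 ≤ u j m) ∧ ∑ m, u j m = x j} := by
  refine (Equiv.piFibers c ℝ).bijOn fun s => ?_
  have hfiber : ∀ j,
      ∑ m : {m // c m = j}, s m = ∑ m ∈ Finset.univ.filter (fun m => c m = j), s m :=
    fun j => (Finset.sum_subtype _ (fun _ => by simp) _).symm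
  simp only [mem_ofPred_eq, Equiv.piFibers_apply, forall_and, hfiber]
  constructor
  · rintro ⟨hnonneg, hsum⟩
    exact ⟨fun m => hnonneg (c m) ⟨m, rfl⟩, sum_eq_sum_of_sum_fiber_eq hsum, hsum⟩
  · rintro ⟨hnonneg, -, hsum⟩
    exact ⟨fun _ m => hnonneg m, hsum⟩

end Fibers

theorem stmt16_general (k n : ℕ) (c : Fin (n + 1) → Fin k)
    (x : Fin k → ℝ) (hx : ∀ j, 0 < x j) (t : ℝ) :
    let Γ : Set (Fin (n + 1) → ℝ) :=
      {s | (∀ m, 0 ≤ s m) ∧ (∑ m, s m = t) ∧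
        ∀ j, ∑ m ∈ Finset.univ.filter (fun m => c m = j), s m = x j}
    (Γ.Nonempty → t = ∑ j, x j) ∧
    (t = ∑ j, x j →
      Set.BijOn
        (fun (s : Fin (n + 1) → ℝ) (j : Fin k) (m : {m : Fin (n + 1) // c m = j}) => s m.1)
        Γ
        {u : ∀ j : Fin k, {m : Fin (n + 1) // c m = j} → ℝ |
          ∀ j, (∀ m, 0 ≤ u j m) ∧ ∑ m, u j m = x j}) ∧
    (∀ j ∈ Finset.univ.image c,
      volume {w : Fin ((Finset.univ.filter fun m => c m = j).card - 1) → ℝ |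
          (∀ i, 0 ≤ w i) ∧ ∑ i, w i ≤ x j}
        = ENNReal.ofReal
            (x j ^ ((Finset.univ.filter fun m => c m = j).card - 1) /
              (((Finset.univ.filter fun m => c m = j).card - 1).factorial : ℝ))) := by
  intro Γ
  refine ⟨fun ⟨s, _, hs, hfib⟩ => hs ▸ sum_eq_sum_of_sum_fiber_eq hfib, fun ht => ?_,
    fun j _ => volume_cornerSimplex _ (hx j).le⟩
  subst ht
  exact bijOn_piFibers c x

/-- For `(ℝᵏ, ∂/∂x₁,...,∂/∂x_k)` and a pattern `c`, the moduli space of directed paths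
from `0` to `(x₁,...,x_k) ∈ ℝ_{>0}^k` with pattern `c` is nonempty only if
`t = x₁+...+x_k`; when `t = Σ xⱼ`, grouping time coordinates by direction gives a
bijection onto a product of simplices `Δ_{|c|ⱼ-1}(xⱼ)`, and each such simplex has
volume `xⱼ^{|c|ⱼ-1}/(|c|ⱼ-1)!` (computed, as in the paper, as the Lebesgue volume of
its coordinate projection). -/
theorem stmt16 (k n : ℕ) (c : Fin (n + 1) → Fin k)
    (hc : ∀ i : Fin n, c i.castSucc ≠ c i.succ)
    (x : Fin k → ℝ) (hx : ∀ j, 0 < x j) (t : ℝ) :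
    let Γ : Set (Fin (n + 1) → ℝ) :=
      {s | (∀ m, 0 ≤ s m) ∧ (∑ m, s m = t) ∧
        ∀ j, ∑ m ∈ Finset.univ.filter (fun m => c m = j), s m = x j}
    (Γ.Nonempty → t = ∑ j, x j) ∧
    (t = ∑ j, x j →
      Set.BijOn
        (fun (s : Fin (n + 1) → ℝ) (j : Fin k) (m : {m : Fin (n + 1) // c m = j}) => s m.1)
        Γ
        {u : ∀ j : Fin k, {m : Fin (n + 1) // c m = j} → ℝ |
          ∀ j, (∀ m, 0 ≤ u j m) ∧ ∑ m, u j m = x j}) ∧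
    (∀ j ∈ Finset.univ.image c,
      volume {w : Fin ((Finset.univ.filter fun m => c m = j).card - 1) → ℝ |
          (∀ i, 0 ≤ w i) ∧ ∑ i, w i ≤ x j}
        = ENNReal.ofReal
            (x j ^ ((Finset.univ.filter fun m => c m = j).card - 1) /
              (((Finset.univ.filter fun m => c m = j).card - 1).factorial : ℝ))) :=
  stmt16_general k n c x hx t
end
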